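/- arXiv:2106.00909 — 2 statements merged into one kernel-verified Lean document; each statement's English description precedes it below -/
import Mathlib

section
/- Let G = (V,E) be a finite simple graph, p ≥ 1, and α > 0. The function ψ(S) = Σ_{v∈S} d_v(S)^p − α|S| on subsets S ⊆ V is supermodular. -/
/-- Induced degree: `d_v(S)` is the number of neighbors of `v` lying in `S`
if `v ∈ S`, and `0` otherwise. -/
noncomputable def indDeg {V : Type*} [DecidableEq V] (G : SimpleGraph V)
    (S : Finset V) (v : V) : ℕ :=
  if v ∈ S then Nat.card {u : V // u ∈ S ∧ G.Adj v u} else 0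

/-- `ψ(S) = Σ_{v∈S} d_v(S)^p − α·|S|`. -/
noncomputable def psi {V : Type*} [DecidableEq V] (G : SimpleGraph V)
    (p α : ℝ) (S : Finset V) : ℝ :=
  (∑ v ∈ S, (indDeg G S v : ℝ) ^ p) - α * S.card

/-!
Both `A ↦ α * #A` and, for each vertex `v`, the count of neighbours of `v` in `A` are modular
in `A`. Hence `A ↦ d_v(A)` is monotone and supermodular (when `v` lies in only one of `S`, `T`,
the inequality is just monotonicity). Composing a monotone supermodular nonnegative function
with the convex increasing map `x ↦ x ^ p` keeps it supermodular (two-point majorization), and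
summing over `v ∈ S ∪ T` (where `0 ^ p = 0` lets every sum range over `S ∪ T`) gives the claim.
-/

open Finset

lemma ConvexOn.map_add_map_le_of_add_eq {f : ℝ → ℝ} {s : Set ℝ} (hf : ConvexOn ℝ s f)
    {a b c d : ℝ} (hc : c ∈ s) (hd : d ∈ s) (hca : c ≤ a) (had : a ≤ d)
    (hsum : a + b = c + d) : f a + f b ≤ f c + f d := by
  rcases had.lt_or_eq with had | rfl
  · have hcd : 0 < d - c := by linarith
    obtain ⟨μ, hμ⟩ : ∃ μ, μ * (d - c) = d - a := ⟨_, div_mul_cancel₀ _ hcd.ne'⟩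
    have hμ0 : 0 ≤ μ := nonneg_of_mul_nonneg_left (by linarith) hcd
    have hμ1 : 0 ≤ 1 - μ := nonneg_of_mul_nonneg_left (by linarith) hcd
    have ha : f a ≤ μ * f c + (1 - μ) * f d := by
      simpa [show μ * c + (1 - μ) * d = a by linear_combination -hμ]
        using hf.2 hc hd hμ0 hμ1 (add_sub_cancel μ 1)
    have hb : f b ≤ (1 - μ) * f c + μ * f d := by
      simpa [show (1 - μ) * c + μ * d = b by linear_combination hμ - hsum]
        using hf.2 hc hd hμ1 hμ0 (sub_add_cancel 1 μ)
    linarith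
  · rw [show b = c by linarith, add_comm]

lemma ConvexOn.map_add_map_le_of_add_le {f : ℝ → ℝ} (hf : ConvexOn ℝ (Set.Ici 0) f)
    (hmono : MonotoneOn f (Set.Ici 0)) {a b c d : ℝ} (hc : 0 ≤ c) (hca : c ≤ a) (hcb : c ≤ b)
    (hsum : a + b ≤ c + d) : f a + f b ≤ f c + f d := by
  -- shrink `d` to `a + b - c` to reach the equality case
  have hfd : f (a + b - c) ≤ f d :=
    hmono (show (0 : ℝ) ≤ a + b - c by linarith) (show (0 : ℝ) ≤ d by linarith) (by linarith)
  have heq := hf.map_add_map_le_of_add_eq (a := a) (b := b) hc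
    (show (0 : ℝ) ≤ a + b - c by linarith) hca (by linarith) (by ring)
  linarith

section InducedDegree

variable {V : Type*} [DecidableEq V] (G : SimpleGraph V)

lemma indDeg_eq_card_filter [DecidableRel G.Adj] {S : Finset V} {v : V} (hv : v ∈ S) :
    indDeg G S v = #{u ∈ S | G.Adj v u} := by
  simp_rw [indDeg, if_pos hv, ← mem_filter, Nat.card_eq_finsetCard]

lemma indDeg_of_notMem {S : Finset V} {v : V} (hv : v ∉ S) : indDeg G S v = 0 :=
  if_neg hv

lemma indDeg_mono {S T : Finset V} (hST : S ⊆ T) (v : V) : indDeg G S v ≤ indDeg G T v := by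
  classical
  by_cases hv : v ∈ S
  · rw [indDeg_eq_card_filter G hv, indDeg_eq_card_filter G (hST hv)]
    exact card_le_card (filter_subset_filter _ hST)
  · simp [indDeg_of_notMem G hv]

lemma indDeg_inter_add_indDeg_union_of_mem {S T : Finset V} {v : V} (hS : v ∈ S)
    (hT : v ∈ T) :
    indDeg G (S ∩ T) v + indDeg G (S ∪ T) v = indDeg G S v + indDeg G T v := by
  classical
  rw [indDeg_eq_card_filter G (mem_inter.2 ⟨hS, hT⟩),
    indDeg_eq_card_filter G (mem_union_left T hS), indDeg_eq_card_filter G hS,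
    indDeg_eq_card_filter G hT, filter_inter_distrib, filter_union]
  exact card_inter_add_card_union _ _

lemma indDeg_add_indDeg_le (S T : Finset V) (v : V) :
    indDeg G S v + indDeg G T v ≤ indDeg G (S ∩ T) v + indDeg G (S ∪ T) v := by
  by_cases hS : v ∈ S <;> by_cases hT : v ∈ T
  · exact (indDeg_inter_add_indDeg_union_of_mem G hS hT).ge
  · rw [indDeg_of_notMem G hT]
    exact (indDeg_mono G subset_union_left v).trans le_add_self
  · rw [indDeg_of_notMem G hS, zero_add]
    exact (indDeg_mono G subset_union_right v).trans le_add_self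
  · simp [indDeg_of_notMem G hS, indDeg_of_notMem G hT]

lemma indDeg_rpow_add_indDeg_rpow_le {p : ℝ} (hp : 1 ≤ p) (S T : Finset V) (v : V) :
    (indDeg G S v : ℝ) ^ p + (indDeg G T v : ℝ) ^ p ≤
      (indDeg G (S ∩ T) v : ℝ) ^ p + (indDeg G (S ∪ T) v : ℝ) ^ p :=
  (convexOn_rpow hp).map_add_map_le_of_add_le
    (Real.monotoneOn_rpow_Ici_of_exponent_nonneg (by linarith)) (Nat.cast_nonneg _)
    (mod_cast indDeg_mono G inter_subset_left v) (mod_cast indDeg_mono G inter_subset_right v)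
    (mod_cast indDeg_add_indDeg_le G S T v)

lemma sum_indDeg_rpow_eq_of_subset {p : ℝ} (hp : p ≠ 0) {A B : Finset V} (hAB : A ⊆ B) :
    ∑ v ∈ A, (indDeg G A v : ℝ) ^ p = ∑ v ∈ B, (indDeg G A v : ℝ) ^ p :=
  sum_subset hAB fun v _ hv ↦ by simp [indDeg_of_notMem G hv, Real.zero_rpow hp]

end InducedDegree

theorem psi_supermodular_general {V : Type*} [DecidableEq V]
    (G : SimpleGraph V) (p α : ℝ) (hp : 1 ≤ p) (S T : Finset V) :
    psi G p α S + psi G p α T ≤ psi G p α (S ∩ T) + psi G p α (S ∪ T) := by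
  have hp0 : p ≠ 0 := by linarith
  have hcard : (#(S ∩ T) : ℝ) + #(S ∪ T) = #S + #T := mod_cast card_inter_add_card_union S T
  have hdeg : ∑ v ∈ S, (indDeg G S v : ℝ) ^ p + ∑ v ∈ T, (indDeg G T v : ℝ) ^ p ≤
      ∑ v ∈ S ∩ T, (indDeg G (S ∩ T) v : ℝ) ^ p + ∑ v ∈ S ∪ T, (indDeg G (S ∪ T) v : ℝ) ^ p := by
    rw [sum_indDeg_rpow_eq_of_subset G hp0 (subset_union_left (s₂ := T)),
      sum_indDeg_rpow_eq_of_subset G hp0 (subset_union_right (s₁ := S)),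
      sum_indDeg_rpow_eq_of_subset G hp0 (inter_subset_union (s := S) (t := T)),
      ← sum_add_distrib, ← sum_add_distrib]
    exact sum_le_sum fun v _ ↦ indDeg_rpow_add_indDeg_rpow_le G hp S T v
  simp only [psi]
  linear_combination hdeg + α * hcard

theorem psi_supermodular {V : Type*} [Fintype V] [DecidableEq V]
    (G : SimpleGraph V) (p α : ℝ) (hp : 1 ≤ p) (hα : 0 < α) (S T : Finset V) :
    psi G p α S + psi G p α T ≤ psi G p α (S ∩ T) + psi G p α (S ∪ T) :=
  psi_supermodular_general G p α hp S T
end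

section
/- Let G = (V,E) be a finite simple graph, p ≥ 1, and S ⊆ V nonempty. Then (1/|S|)·Σ_{j∈S} Δ_j(S) ≤ (p+1)·f_p(S), where Δ_j(S) = d_j(S)^p + Σ_{i ∈ N(j)∩S, i≠j}(d_i(S)^p − (d_i(S)−1)^p) and f_p(S) = (1/|S|)Σ_{v∈S} d_v(S)^p. -/
/-- `Δ_j(S) = d_j(S)^p + Σ_{i ∈ N(j)∩S} (d_i(S)^p − (d_i(S)−1)^p)`
(note `j ∉ N(j)` since the graph is simple). -/
noncomputable def DeltaP {V : Type*} [DecidableEq V] (G : SimpleGraph V)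
    [DecidableRel G.Adj] (p : ℝ) (S : Finset V) (j : V) : ℝ :=
  (indDeg G S j : ℝ) ^ p +
    ∑ i ∈ S.filter (fun i => G.Adj j i ∧ i ≠ j),
      ((indDeg G S i : ℝ) ^ p - ((indDeg G S i : ℝ) - 1) ^ p)

/-- `f_p(S) = (1/|S|) Σ_{v∈S} d_v(S)^p`. -/
noncomputable def fp {V : Type*} [DecidableEq V] (G : SimpleGraph V)
    (p : ℝ) (S : Finset V) : ℝ :=
  (1 / (S.card : ℝ)) * ∑ v ∈ S, (indDeg G S v : ℝ) ^ p

/-!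
Summing `Δ_j(S)` over `j ∈ S` and exchanging the order of summation, each `i ∈ S` is counted
once for every neighbour it has in `S`, so `Σ_j Δ_j(S) = Σ_i d_i^p + Σ_i d_i (d_i^p − (d_i − 1)^p)`.
By Bernoulli's inequality, `x^p − (x − 1)^p ≤ p x^{p−1}` for `x ≥ 1`, so each term of the second
sum is at most `p d_i^p` (terms with `d_i = 0` vanish).
-/

open Finset

namespace Real

theorem rpow_sub_rpow_sub_one_le {p x : ℝ} (hp : 1 ≤ p) (hx : 1 ≤ x) :
    x ^ p - (x - 1) ^ p ≤ p * x ^ (p - 1) := by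
  have hx0 : 0 < x := by linarith
  have hinv : x⁻¹ ≤ 1 := inv_le_one_of_one_le₀ hx
  have hbernoulli : 1 + p * -x⁻¹ ≤ (1 + -x⁻¹) ^ p :=
    one_add_mul_self_le_rpow_one_add (by linarith) hp
  have hfactor : (x - 1) ^ p = x ^ p * (1 + -x⁻¹) ^ p := by
    rw [← mul_rpow hx0.le (by linarith)]
    congr 1
    field_simp
    ring
  rw [hfactor, rpow_sub_one hx0.ne']
  have hxp : 0 ≤ x ^ p := by positivity
  calc x ^ p - x ^ p * (1 + -x⁻¹) ^ p ≤ x ^ p - x ^ p * (1 + p * -x⁻¹) := by gcongr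
    _ = p * (x ^ p / x) := by ring

theorem natCast_mul_rpow_sub_rpow_sub_one_le {p : ℝ} (hp : 1 ≤ p) (n : ℕ) :
    n * ((n : ℝ) ^ p - ((n : ℝ) - 1) ^ p) ≤ p * (n : ℝ) ^ p := by
  rcases Nat.eq_zero_or_pos n with rfl | hn
  · simp only [CharP.cast_eq_zero, zero_mul]
    positivity
  have hn' : (1 : ℝ) ≤ n := by exact_mod_cast hn
  calc (n : ℝ) * ((n : ℝ) ^ p - ((n : ℝ) - 1) ^ p) ≤ n * (p * (n : ℝ) ^ (p - 1)) := by
        gcongr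
        exact rpow_sub_rpow_sub_one_le hp hn'
    _ = p * (n : ℝ) ^ p := by
        rw [rpow_sub_one (by positivity)]
        field_simp

end Real

section InducedDegree

variable {V : Type*} [DecidableEq V] (G : SimpleGraph V) [DecidableRel G.Adj] (S : Finset V)

theorem indDeg_of_mem {v : V} (hv : v ∈ S) : indDeg G S v = #{u ∈ S | G.Adj v u} := by
  rw [indDeg, if_pos hv, ← Nat.card_eq_finsetCard]
  exact Nat.card_congr (Equiv.subtypeEquivRight fun u => (mem_filter).symm)

theorem sum_sum_adj_eq_sum_indDeg_smul {M : Type*} [AddCommMonoid M] (f : V → M) :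
    ∑ j ∈ S, ∑ i ∈ S with G.Adj j i ∧ i ≠ j, f i = ∑ i ∈ S, indDeg G S i • f i := by
  have hne : ∀ j, ({i ∈ S | G.Adj j i ∧ i ≠ j} : Finset V) = S.bipartiteAbove G.Adj j :=
    fun j => filter_congr fun i _ => and_iff_left_of_imp fun h => h.ne'
  simp_rw [hne, sum_sum_bipartiteAbove_eq_sum_sum_bipartiteBelow, sum_const]
  refine sum_congr rfl fun i hi => ?_
  rw [indDeg_of_mem G S hi, bipartiteBelow]
  simp_rw [G.adj_comm _ i]

theorem sum_DeltaP_eq (p : ℝ) :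
    ∑ j ∈ S, DeltaP G p S j = ∑ i ∈ S, (indDeg G S i : ℝ) ^ p +
      ∑ i ∈ S, (indDeg G S i : ℝ) * ((indDeg G S i : ℝ) ^ p - ((indDeg G S i : ℝ) - 1) ^ p) := by
  simp only [DeltaP, sum_add_distrib, sum_sum_adj_eq_sum_indDeg_smul, nsmul_eq_mul]

theorem sum_DeltaP_le {p : ℝ} (hp : 1 ≤ p) :
    ∑ j ∈ S, DeltaP G p S j ≤ (p + 1) * ∑ i ∈ S, (indDeg G S i : ℝ) ^ p := by
  have hterm := sum_le_sum fun i (_ : i ∈ S) =>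
    Real.natCast_mul_rpow_sub_rpow_sub_one_le hp (indDeg G S i)
  rw [← mul_sum] at hterm
  rw [sum_DeltaP_eq]
  linarith

end InducedDegree

theorem avg_DeltaP_le_general {V : Type*} [DecidableEq V]
    (G : SimpleGraph V) [DecidableRel G.Adj] (p : ℝ) (hp : 1 ≤ p)
    (S : Finset V) :
    (1 / (S.card : ℝ)) * ∑ j ∈ S, DeltaP G p S j ≤ (p + 1) * fp G p S := by
  rw [fp, mul_left_comm]
  exact mul_le_mul_of_nonneg_left (sum_DeltaP_le G S hp) (by positivity)

theorem avg_DeltaP_le {V : Type*} [Fintype V] [DecidableEq V]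
    (G : SimpleGraph V) [DecidableRel G.Adj] (p : ℝ) (hp : 1 ≤ p)
    (S : Finset V) (hS : S.Nonempty) :
    (1 / (S.card : ℝ)) * ∑ j ∈ S, DeltaP G p S j ≤ (p + 1) * fp G p S :=
  avg_DeltaP_le_general G p hp S
end
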